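/- arXiv:1210.4715 — 8 statements merged into one kernel-verified Lean document; each statement's English description precedes it below -/
import Mathlib

section
/- Let X, Y be Banach spaces, G ⊂ X open, a ∈ G, and f : G → Y. If the one-sided Hadamard directional derivative f'_{H+}(a,0) = lim_{z→0, t→0+} (f(a+tz)−f(a))/t exists, then f is Lipschitz at a, i.e., there exist K > 0 and δ > 0 with ‖f(x)−f(a)‖ ≤ K‖x−a‖ for all x in the ball B(a,δ). -/
open Filter Metric Set Topology MeasureTheory

section CommonDefs
variable {X Y : Type*}

/-- `f` is (pointwise) Lipschitz at `x`:
`limsup_{y→x} ‖f y - f x‖/‖y - x‖ < ∞`. -/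
def LipschitzAtPt [NormedAddCommGroup X] [NormedAddCommGroup Y]
    (f : X → Y) (x : X) : Prop :=
  ∃ K > (0:ℝ), ∃ δ > (0:ℝ), ∀ y ∈ ball x δ, ‖f y - f x‖ ≤ K * ‖y - x‖

/-- The (two-sided) Hadamard directional derivative of `f` at `x` in direction `v` is `y`:
`(f (x + t z) - f x)/t → y` as `z → v`, `t → 0`, `t ≠ 0`. -/
def HadamardDerivAt [NormedAddCommGroup X] [NormedSpace ℝ X]
    [NormedAddCommGroup Y] [NormedSpace ℝ Y]
    (f : X → Y) (x v : X) (y : Y) : Prop :=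
  Tendsto (fun p : ℝ × X => p.1⁻¹ • (f (x + p.1 • p.2) - f x))
    ((𝓝[≠] (0:ℝ)) ×ˢ 𝓝 v) (𝓝 y)

/-- The one-sided Hadamard directional derivative of `f` at `x` in direction `v` is `y`:
`(f (x + t z) - f x)/t → y` as `z → v`, `t → 0+`. -/
def HadamardPlusDerivAt [NormedAddCommGroup X] [NormedSpace ℝ X]
    [NormedAddCommGroup Y] [NormedSpace ℝ Y]
    (f : X → Y) (x v : X) (y : Y) : Prop :=
  Tendsto (fun p : ℝ × X => p.1⁻¹ • (f (x + p.1 • p.2) - f x))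
    ((𝓝[>] (0:ℝ)) ×ˢ 𝓝 v) (𝓝 y)

/-- `f` is Gâteaux differentiable at `x` with derivative the continuous linear map `L`. -/
def GateauxDiffAt [NormedAddCommGroup X] [NormedSpace ℝ X]
    [NormedAddCommGroup Y] [NormedSpace ℝ Y]
    (f : X → Y) (x : X) (L : X →L[ℝ] Y) : Prop :=
  ∀ v : X, Tendsto (fun t : ℝ => t⁻¹ • (f (x + t • v) - f x)) (𝓝[≠] (0:ℝ)) (𝓝 (L v))

/-- `f` is Hadamard differentiable at `x` with derivative the continuous linear map `L`. -/
def HadamardDiffAt [NormedAddCommGroup X] [NormedSpace ℝ X]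
    [NormedAddCommGroup Y] [NormedSpace ℝ Y]
    (f : X → Y) (x : X) (L : X →L[ℝ] Y) : Prop :=
  ∀ v : X, HadamardDerivAt f x v (L v)

/-- `A` is directionally porous at `x`. -/
def DirPorousAt [NormedAddCommGroup X] [NormedSpace ℝ X] (A : Set X) (x : X) : Prop :=
  ∃ v : X, v ≠ 0 ∧ ∃ p > (0:ℝ), ∃ t : ℕ → ℝ, (∀ n, 0 < t n) ∧
    Tendsto t atTop (𝓝 (0:ℝ)) ∧ ∀ n, ball (x + t n • v) (p * t n) ∩ A = ∅

/-- `A` is a countable union of directionally porous sets. -/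
def SigmaDirPorous [NormedAddCommGroup X] [NormedSpace ℝ X] (A : Set X) : Prop :=
  ∃ S : ℕ → Set X, A = ⋃ n, S n ∧ ∀ n, ∀ x ∈ S n, DirPorousAt (S n) x

/-- `A` is porous at `x`. -/
def PorousAt [NormedAddCommGroup X] (A : Set X) (x : X) : Prop :=
  ∃ p > (0:ℝ), ∃ y : ℕ → X, (∀ n, y n ≠ x) ∧ Tendsto y atTop (𝓝 x) ∧
    ∀ n, ball (y n) (p * ‖y n - x‖) ∩ A = ∅

/-- `A` is a countable union of porous sets. -/
def SigmaPorous [NormedAddCommGroup X] (A : Set X) : Prop :=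
  ∃ S : ℕ → Set X, A = ⋃ n, S n ∧ ∀ n, ∀ x ∈ S n, PorousAt (S n) x

end CommonDefs
theorem stmt2 {X Y : Type*} [NormedAddCommGroup X] [NormedSpace ℝ X] [CompleteSpace X]
    [NormedAddCommGroup Y] [NormedSpace ℝ Y] [CompleteSpace Y]
    (G : Set X) (hG : IsOpen G) (f : X → Y) (a : X) (ha : a ∈ G)
    (h : ∃ y : Y, HadamardPlusDerivAt f a 0 y) :
    ∃ K > (0:ℝ), ∃ δ > (0:ℝ), ∀ x ∈ ball a δ, ‖f x - f a‖ ≤ K * ‖x - a‖ := by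
  obtain ⟨y, hy⟩ := h
  have h1 := hy (Metric.ball_mem_nhds y one_pos)
  rw [Filter.mem_map, Filter.mem_prod_iff] at h1
  obtain ⟨s, hs, u, hu, hsu⟩ := h1
  obtain ⟨ε₁, hε₁, hs1⟩ := mem_nhdsGT_iff_exists_Ioo_subset.mp hs
  obtain ⟨ε₂, hε₂, hu1⟩ := Metric.mem_nhds_iff.mp hu
  have hε₁' : (0:ℝ) < ε₁ := hε₁
  refine ⟨(2/ε₂) * (‖y‖ + 1), by positivity, ε₁ * ε₂ / 2, by positivity, ?_⟩
  intro x hx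
  rcases eq_or_ne x a with rfl | hne
  · simp
  have hr : (0:ℝ) < ‖x - a‖ := by
    rw [norm_pos_iff]; exact sub_ne_zero.mpr hne
  set r := ‖x - a‖ with hrdef
  set t := 2 * r / ε₂ with htdef
  have ht0 : 0 < t := by positivity
  have hxd : r < ε₁ * ε₂ / 2 := by
    simpa [dist_eq_norm] using hx
  have ht1 : t < ε₁ := by
    rw [htdef, div_lt_iff₀ hε₂]
    nlinarith
  set z := t⁻¹ • (x - a) with hzdef
  have hz : ‖z‖ < ε₂ := by
    rw [hzdef, norm_smul, norm_inv, Real.norm_eq_abs, abs_of_pos ht0,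
      inv_mul_lt_iff₀ ht0, htdef, div_mul_cancel₀ _ (ne_of_gt hε₂)]
    linarith
  have hmem : (t, z) ∈ (fun p : ℝ × X => p.1⁻¹ • (f (a + p.1 • p.2) - f a)) ⁻¹' ball y 1 := by
    apply hsu
    refine ⟨hs1 ⟨ht0, ht1⟩, hu1 ?_⟩
    simpa [Metric.mem_ball, dist_eq_norm] using hz
  have haz : a + t • z = x := by
    rw [hzdef, smul_smul, mul_inv_cancel₀ (ne_of_gt ht0), one_smul]
    abel
  have hkey : ‖t⁻¹ • (f x - f a) - y‖ < 1 := by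
    have := hmem
    rw [Set.mem_preimage, Metric.mem_ball, dist_eq_norm, haz] at this
    exact this
  have h2 : ‖t⁻¹ • (f x - f a)‖ ≤ ‖y‖ + 1 := by
    have := norm_sub_norm_le (t⁻¹ • (f x - f a)) y
    linarith
  rw [norm_smul, norm_inv, Real.norm_eq_abs, abs_of_pos ht0, inv_mul_le_iff₀ ht0] at h2
  calc ‖f x - f a‖ ≤ t * (‖y‖ + 1) := h2
    _ = (2/ε₂) * (‖y‖ + 1) * r := by rw [htdef]; ring
end

section
/- Let X, Y be Banach spaces, G ⊂ X open, a ∈ G, and f : G → Y. The following are equivalent: (i) f'_{H+}(a,0) exists; (ii) f'_H(a,0) exists; (iii) f'_H(a,0) = 0; (iv) f is Lipschitz at a. -/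
open Filter Metric Set Topology MeasureTheory

theorem stmt3 {X Y : Type*} [NormedAddCommGroup X] [NormedSpace ℝ X] [CompleteSpace X]
    [NormedAddCommGroup Y] [NormedSpace ℝ Y] [CompleteSpace Y]
    (G : Set X) (hG : IsOpen G) (f : X → Y) (a : X) (ha : a ∈ G) :
    List.TFAE [
      (∃ y : Y, HadamardPlusDerivAt f a 0 y),
      (∃ y : Y, HadamardDerivAt f a 0 y),
      HadamardDerivAt f a 0 (0 : Y),
      LipschitzAtPt f a ] := by
  tfae_have 3 → 2 := fun h => ⟨0, h⟩
  tfae_have 2 → 1 := by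
    rintro ⟨y, hy⟩
    exact ⟨y, hy.mono_left (Filter.prod_mono
      (nhdsWithin_mono _ fun x hx => ne_of_gt hx) le_rfl)⟩
  tfae_have 1 → 4 := by
    rintro ⟨y, hy⟩
    have h1 : ∀ᶠ p : ℝ × X in (𝓝[>] (0:ℝ)) ×ˢ 𝓝 0,
        ‖p.1⁻¹ • (f (a + p.1 • p.2) - f a)‖ < ‖y‖ + 1 :=
      hy.norm.eventually_lt_const (lt_add_one _)
    rw [eventually_prod_iff] at h1
    obtain ⟨pa, hpa, pb, hpb, H⟩ := h1
    obtain ⟨ε, hε, hIoo⟩ := mem_nhdsGT_iff_exists_Ioo_subset.mp hpa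
    rw [mem_Ioi] at hε
    obtain ⟨δ, hδ, hball⟩ := Metric.mem_nhds_iff.mp hpb
    refine ⟨(‖y‖ + 1) * (2 / δ), by positivity, ε * δ / 2, by positivity, ?_⟩
    intro w hw
    rcases eq_or_ne w a with rfl | hne
    · simp
    have hd : 0 < ‖w - a‖ := by
      rw [norm_pos_iff]; exact sub_ne_zero.mpr hne
    set d := ‖w - a‖ with hd'
    have hdr : d < ε * δ / 2 := by
      have := mem_ball_iff_norm.mp hw
      simpa [hd'] using this
    set t : ℝ := 2 * d / δ with ht'
    have ht : 0 < t := by positivity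
    have htε : t < ε := by
      rw [ht', div_lt_iff₀ hδ]
      linarith
    set z : X := t⁻¹ • (w - a) with hz'
    have hzn : ‖z‖ = δ / 2 := by
      rw [hz', norm_smul, norm_inv, Real.norm_eq_abs, abs_of_pos ht, ht']
      field_simp
      ring
    have hzb : z ∈ ball (0:X) δ := by
      rw [mem_ball_iff_norm, sub_zero, hzn]
      linarith
    have hw' : a + t • z = w := by
      rw [hz', smul_smul, mul_inv_cancel₀ (ne_of_gt ht), one_smul]
      abel
    have := H (hIoo ⟨ht, htε⟩) (hball hzb)
    rw [hw', norm_smul, norm_inv, Real.norm_eq_abs, abs_of_pos ht] at this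
    have h2 : ‖f w - f a‖ < (‖y‖ + 1) * t := by
      have h := mul_lt_mul_of_pos_left this ht
      rw [← mul_assoc, mul_inv_cancel₀ (ne_of_gt ht), one_mul] at h
      nlinarith [h]
    have : (‖y‖ + 1) * t = (‖y‖ + 1) * (2 / δ) * d := by
      rw [ht']; field_simp
    rw [this] at h2
    exact le_of_lt h2
  tfae_have 4 → 3 := by
    rintro ⟨K, hK, δ, hδ, H⟩
    rw [HadamardDerivAt]
    have h2 : ∀ᶠ p : ℝ × X in (𝓝[≠] (0:ℝ)) ×ˢ 𝓝 0, p.1 ≠ 0 :=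
      Filter.Eventually.prod_inl self_mem_nhdsWithin _
    have h3 : Tendsto (fun p : ℝ × X => |p.1| * ‖p.2‖) ((𝓝[≠] (0:ℝ)) ×ˢ 𝓝 0) (𝓝 0) := by
      have := ((tendsto_fst.mono_left (Filter.prod_mono nhdsWithin_le_nhds le_rfl) :
        Tendsto (fun p : ℝ × X => p.1) ((𝓝[≠] (0:ℝ)) ×ˢ 𝓝 0) (𝓝 0)).abs).mul
        (tendsto_snd.norm : Tendsto (fun p : ℝ × X => ‖p.2‖) ((𝓝[≠] (0:ℝ)) ×ˢ 𝓝 0) (𝓝 ‖(0:X)‖))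
      simpa using this
    have hlt : ∀ᶠ p : ℝ × X in (𝓝[≠] (0:ℝ)) ×ˢ 𝓝 0, |p.1| * ‖p.2‖ < δ :=
      h3.eventually_lt_const hδ
    have hb : ∀ᶠ p : ℝ × X in (𝓝[≠] (0:ℝ)) ×ˢ 𝓝 0,
        ‖p.1⁻¹ • (f (a + p.1 • p.2) - f a)‖ ≤ K * ‖p.2‖ := by
      filter_upwards [h2, hlt] with p hp1 hp2
      have hmem : a + p.1 • p.2 ∈ ball a δ := by
        rw [mem_ball_iff_norm]
        simpa [norm_smul] using hp2
      have := H _ hmem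
      rw [add_sub_cancel_left, norm_smul, Real.norm_eq_abs] at this
      rw [norm_smul, norm_inv, Real.norm_eq_abs]
      calc |p.1|⁻¹ * ‖f (a + p.1 • p.2) - f a‖ ≤ |p.1|⁻¹ * (K * (|p.1| * ‖p.2‖)) := by
            apply mul_le_mul_of_nonneg_left this (by positivity)
        _ = K * ‖p.2‖ := by
            have habs : |p.1| ≠ 0 := abs_ne_zero.mpr hp1
            field_simp
    have htarget : Tendsto (fun p : ℝ × X => K * ‖p.2‖) ((𝓝[≠] (0:ℝ)) ×ˢ 𝓝 0) (𝓝 0) := by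
      have := (tendsto_snd.norm : Tendsto (fun p : ℝ × X => ‖p.2‖)
        ((𝓝[≠] (0:ℝ)) ×ˢ 𝓝 0) (𝓝 ‖(0:X)‖)).const_mul K
      simpa using this
    exact squeeze_zero_norm' hb htarget
  tfae_finish
end

section
/- Let U be an open subset of a Banach space X, let M ⊂ U be residual in U (i.e., U \ M is meager in U), and let z ∈ U. Then there exists a line L ⊂ X (a set of the form {a + t·v : t ∈ ℝ} with v ≠ 0) such that z is an accumulation point of M ∩ L. -/
open Filter Metric Set Topology MeasureTheory

theorem stmt4 {X : Type*} [NormedAddCommGroup X] [NormedSpace ℝ X] [CompleteSpace X]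
    [Nontrivial X]
    (U M : Set X) (hU : IsOpen U) (hM : M ⊆ U)
    (hres : IsMeagre (U \ M)) (z : X) (hz : z ∈ U) :
    ∃ a v : X, v ≠ 0 ∧ AccPt z (𝓟 (M ∩ {x | ∃ t : ℝ, x = a + t • v})) := by
  -- scales
  set c : ℕ → ℝ := fun n => (1/2 : ℝ) ^ n with hc
  have hcpos : ∀ n, 0 < c n := fun n => pow_pos (by norm_num) n
  have hcle : ∀ n, c n ≤ 1 := fun n => pow_le_one₀ (by norm_num) (by norm_num)
  -- each bad set is meager
  have hmeag : ∀ n : ℕ, IsMeagre ((fun v : X => z + c n • v) ⁻¹' (U \ M)) := by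
    intro n
    have h1 : Continuous (fun v : X => z + c n • v) := continuous_const.add (continuous_const_smul _)
    have h2 : IsOpenMap (fun v : X => z + c n • v) := by
      have : (fun v : X => z + c n • v) =
          (Homeomorph.addLeft z) ∘ (Homeomorph.smulOfNeZero (c n) (hcpos n).ne') := rfl
      rw [this]
      exact (Homeomorph.addLeft z).isOpenMap.comp
        (Homeomorph.smulOfNeZero (c n) (hcpos n).ne').isOpenMap
    exact hres.preimage_of_isOpenMap h1 h2
  -- the good set is residual, hence dense
  have hresid : (⋂ n : ℕ, ((fun v : X => z + c n • v) ⁻¹' (U \ M))ᶜ) ∈ residual X :=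
    countable_iInter_mem.mpr fun n => hmeag n
  have hdense : Dense (⋂ n : ℕ, ((fun v : X => z + c n • v) ⁻¹' (U \ M))ᶜ) :=
    dense_of_mem_residual hresid
  -- choose ε with ball z ε ⊆ U
  obtain ⟨ε, hε, hball⟩ := Metric.isOpen_iff.mp hU z hz
  -- find v in the good set, 0 < ‖v‖ < ε
  have hopen : IsOpen (ball (0:X) ε \ {0}) := isOpen_ball.sdiff isClosed_singleton
  have hne : (ball (0:X) ε \ {0}).Nonempty := by
    obtain ⟨u, hu⟩ := exists_ne (0:X)
    have hu' : (0:ℝ) < ‖u‖ := norm_pos_iff.mpr hu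
    refine ⟨(ε/2/‖u‖) • u, ?_, ?_⟩
    · simp only [mem_ball, dist_zero_right, norm_smul]
      rw [Real.norm_eq_abs, abs_of_pos (by positivity)]
      rw [div_mul_cancel₀ _ (norm_ne_zero_iff.mpr hu)]
      linarith
    · simp only [mem_singleton_iff]
      exact smul_ne_zero (by positivity) hu
  obtain ⟨v, hvd, hv1⟩ := hdense.inter_open_nonempty _ hopen hne
  obtain ⟨hvball, hv0⟩ := hvd
  have hv0 : v ≠ 0 := hv0
  have hvnorm : ‖v‖ < ε := by simpa [dist_zero_right] using hvball
  -- each z + c n • v ∈ M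
  have hkey : ∀ n, z + c n • v ∈ M := by
    intro n
    have h1 : v ∈ ((fun v : X => z + c n • v) ⁻¹' (U \ M))ᶜ := by
      exact mem_iInter.mp hv1 n
    have h2 : z + c n • v ∈ U := by
      apply hball
      simp only [mem_ball, dist_self_add_left, norm_smul, Real.norm_eq_abs,
        abs_of_pos (hcpos n)]
      calc c n * ‖v‖ ≤ 1 * ‖v‖ := by
            exact mul_le_mul_of_nonneg_right (hcle n) (norm_nonneg v)
        _ < ε := by simpa using hvnorm
    by_contra hMn
    exact h1 ⟨h2, hMn⟩
  refine ⟨z, v, hv0, ?_⟩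
  rw [accPt_iff_nhds]
  intro V hV
  obtain ⟨δ, hδ, hδV⟩ := Metric.mem_nhds_iff.mp hV
  obtain ⟨n, hn⟩ := exists_pow_lt_of_lt_one (x := δ / (‖v‖ + 1)) (by positivity) (by norm_num : (1/2:ℝ) < 1)
  refine ⟨z + c n • v, ⟨?_, hkey n, ⟨c n, rfl⟩⟩, ?_⟩
  · apply hδV
    simp only [mem_ball, dist_self_add_left, norm_smul, Real.norm_eq_abs, abs_of_pos (hcpos n)]
    have h2 : c n * ‖v‖ < (δ / (‖v‖ + 1)) * (‖v‖+1) := by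
      apply mul_lt_mul' hn.le _ (norm_nonneg v) (by positivity)
      linarith
    rw [div_mul_cancel₀ _ (by positivity : (‖v‖:ℝ) + 1 ≠ 0)] at h2
    exact h2
  · intro h
    have h2 : c n • v = 0 := by
      have := congrArg (fun x => x - z) h
      simpa using this
    exact smul_ne_zero (hcpos n).ne' hv0 h2
end

section
/- Let X be a separable Banach space, Y a Banach space, G ⊂ X open, and f : G → Y a mapping. Let A be the set of all x ∈ G for which there exist v in the unit sphere of X and δ > 0 such that limsup_{y→x, y∈C(x,v,δ)} ‖f(y)−f(x)‖/‖y−x‖ < ∞ but f is not Lipschitz at x. Then A is a σ-directionally porous subset of X. -/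
open Filter Metric Set Topology MeasureTheory

/-- The open cone `C(x,v,δ)`: all `y ≠ x` with `‖v - (y-x)/‖y-x‖‖ < δ`. -/
def OpenCone {X : Type*} [NormedAddCommGroup X] [NormedSpace ℝ X]
    (x v : X) (δ : ℝ) : Set X :=
  {y | y ≠ x ∧ ‖v - ‖y - x‖⁻¹ • (y - x)‖ < δ}

private lemma cone_aux {X : Type*} [NormedAddCommGroup X] [NormedSpace ℝ X]
    {v u : X} {δ s : ℝ} (hδ : 0 < δ) (hδ1 : δ ≤ 1)
    (hv : |‖v‖ - 1| ≤ δ / 16) (hs : 0 < s) (hu : ‖u - s • v‖ ≤ δ / 16 * s) :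
    7 / 8 * s ≤ ‖u‖ ∧ ‖u‖ ≤ 9 / 8 * s ∧ ‖v - ‖u‖⁻¹ • u‖ < δ := by
  have hν := abs_le.1 hv
  have hsv : ‖s • v‖ = s * ‖v‖ := by
    rw [norm_smul, Real.norm_of_nonneg hs.le]
  have h1 : |‖u‖ - s * ‖v‖| ≤ δ / 16 * s := by
    rw [← hsv]; exact (abs_norm_sub_norm_le u (s • v)).trans hu
  have h1' := abs_le.1 h1
  have ha1 : 7 / 8 * s ≤ ‖u‖ := by nlinarith
  have ha2 : ‖u‖ ≤ 9 / 8 * s := by nlinarith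
  have hupos : 0 < ‖u‖ := lt_of_lt_of_le (by nlinarith) ha1
  refine ⟨ha1, ha2, ?_⟩
  have e1 : v - ‖u‖⁻¹ • u = ‖u‖⁻¹ • (‖u‖ • v - u) := by
    rw [smul_sub, smul_smul, inv_mul_cancel₀ hupos.ne', one_smul]
  have e2 : ‖u‖ • v - u = (‖u‖ - s) • v + (s • v - u) := by
    rw [sub_smul]; abel
  have h2 : ‖‖u‖ • v - u‖ ≤ |‖u‖ - s| * ‖v‖ + δ / 16 * s := by
    rw [e2]
    refine (norm_add_le _ _).trans ?_
    gcongr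
    · rw [norm_smul, Real.norm_eq_abs]
    · rw [norm_sub_rev]; exact hu
  have h3 : |‖u‖ - s| ≤ δ / 8 * s := by
    rw [abs_le]
    constructor <;> nlinarith [hν.1, hν.2, h1'.1, h1'.2]
  have h4 : ‖v - ‖u‖⁻¹ • u‖ = ‖u‖⁻¹ * ‖‖u‖ • v - u‖ := by
    rw [e1, norm_smul, Real.norm_eq_abs, abs_of_pos (inv_pos.2 hupos)]
  have hvle : ‖v‖ ≤ 17/16 := by nlinarith
  have habs : |‖u‖ - s| * ‖v‖ ≤ (δ/8*s) * (17/16) :=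
    mul_le_mul h3 hvle (norm_nonneg v) (by positivity)
  have hb : ‖‖u‖ • v - u‖ < δ * ‖u‖ := by nlinarith
  rw [h4]
  calc ‖u‖⁻¹ * ‖‖u‖ • v - u‖ < ‖u‖⁻¹ * (δ * ‖u‖) :=
        mul_lt_mul_of_pos_left hb (inv_pos.2 hupos)
    _ = δ := by field_simp


set_option maxHeartbeats 1000000 in
private lemma piece_porous {X Y : Type*} [NormedAddCommGroup X] [NormedSpace ℝ X]
    [NormedAddCommGroup Y]
    (f : X → Y) (v : X) (δ K r : ℝ)
    (hδ : 0 < δ) (hδ1 : δ ≤ 1) (hv : |‖v‖ - 1| ≤ δ / 16) (hK : 1 ≤ K) (hr : 0 < r)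
    (T : Set X)
    (hT : ∀ z ∈ T, ∀ w ∈ OpenCone z v δ, ‖w - z‖ < r → ‖f w - f z‖ ≤ K * ‖w - z‖)
    (x : X) (hnl : ¬ LipschitzAtPt f x) : DirPorousAt T x := by
  have hK0 : (0:ℝ) < K := lt_of_lt_of_le zero_lt_one hK
  set L : ℝ := 144 * K / δ + 1 with hLdef
  have hLpos : 0 < L := by positivity
  unfold LipschitzAtPt at hnl
  push_neg at hnl
  have hsel : ∀ n : ℕ, ∃ y : X,
      y ∈ ball x (min (1/(n+1:ℝ)) (δ*r/128)) ∧ L * ‖y - x‖ < ‖f y - f x‖ := by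
    intro n
    exact hnl L hLpos (min (1/(n+1:ℝ)) (δ*r/128)) (lt_min (by positivity) (by positivity))
  choose y hy1 hy2 using hsel
  have hyx : ∀ n, y n ≠ x := by
    intro n h
    have h2 := hy2 n
    rw [h] at h2
    simp at h2
  have htpos : ∀ n, (0:ℝ) < ‖y n - x‖ :=
    fun n => norm_pos_iff.2 (sub_ne_zero.2 (hyx n))
  set sq : ℕ → ℝ := fun n => 64 / δ * ‖y n - x‖ with hsqdef
  have hsqpos : ∀ n, 0 < sq n := fun n => by
    have := htpos n; positivity
  have hvpos : (0:ℝ) < ‖v‖ := by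
    have := abs_le.1 hv; nlinarith
  refine ⟨-v, by simpa [neg_ne_zero] using norm_pos_iff.1 hvpos, δ/64, by positivity,
    sq, hsqpos, ?_, ?_⟩
  · have hb : ∀ n : ℕ, sq n ≤ 64/δ * (1/(n+1)) := by
      intro n
      have h := mem_ball.1 (hy1 n)
      rw [dist_eq_norm] at h
      have ht1 : ‖y n - x‖ ≤ 1/(n+1) := le_of_lt (lt_of_lt_of_le h (min_le_left _ _))
      exact mul_le_mul_of_nonneg_left ht1 (by positivity)
    have h0 : Tendsto (fun n : ℕ => 64/δ * (1/(n+1:ℝ))) atTop (𝓝 0) := by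
      simpa using tendsto_one_div_add_atTop_nhds_zero_nat.const_mul (64/δ)
    exact squeeze_zero (fun n => (hsqpos n).le) hb h0
  · intro n
    rw [eq_empty_iff_forall_notMem]
    rintro z ⟨hz1, hz2⟩
    set t : ℝ := ‖y n - x‖ with htdef
    have hts : t = δ/64 * sq n := by
      rw [hsqdef]
      field_simp
      rw [htdef]
    have htr : t < δ*r/128 := by
      have h := mem_ball.1 (hy1 n)
      rw [dist_eq_norm] at h
      exact lt_of_lt_of_le h (min_le_right _ _)
    have hsr : sq n < r/2 := by
      have h1 : sq n < 64/δ * (δ*r/128) := by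
        rw [hsqdef]
        exact mul_lt_mul_of_pos_left htr (by positivity)
      have h2 : 64/δ * (δ*r/128) = r/2 := by field_simp; ring
      linarith
    -- ‖(x - z) - sq n • v‖ small
    have hball := mem_ball.1 hz1
    rw [dist_eq_norm] at hball
    have hxz64 : ‖(x - z) - sq n • v‖ ≤ δ/64 * sq n := by
      have e : (x - z) - sq n • v = -(z - (x + sq n • (-v))) := by
        rw [smul_neg]; abel
      rw [e, norm_neg]
      exact hball.le
    have hxz : ‖(x - z) - sq n • v‖ ≤ δ/16 * sq n :=
      le_trans hxz64 (by nlinarith [hsqpos n])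
    obtain ⟨hx7, hx9, hxcone⟩ := cone_aux hδ hδ1 hv (hsqpos n) hxz
    have hyz : ‖(y n - z) - sq n • v‖ ≤ δ/16 * sq n := by
      have e : (y n - z) - sq n • v = (y n - x) + ((x - z) - sq n • v) := by abel
      rw [e]
      calc ‖(y n - x) + ((x - z) - sq n • v)‖
          ≤ ‖y n - x‖ + ‖(x - z) - sq n • v‖ := norm_add_le _ _
        _ ≤ δ/64 * sq n + δ/64 * sq n := by
            refine add_le_add ?_ hxz64
            rw [← htdef, hts]
        _ ≤ δ/16 * sq n := by nlinarith [hsqpos n]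
    obtain ⟨hy7, hy9, hycone⟩ := cone_aux hδ hδ1 hv (hsqpos n) hyz
    have hxne : x ≠ z := by
      intro h
      rw [h, sub_self, norm_zero] at hx7
      nlinarith [hsqpos n]
    have hyne : y n ≠ z := by
      intro h
      rw [h, sub_self, norm_zero] at hy7
      nlinarith [hsqpos n]
    have hxr : ‖x - z‖ < r := by linarith
    have hyr : ‖y n - z‖ < r := by linarith
    have hfx : ‖f x - f z‖ ≤ K * (9/8 * sq n) := by
      have := hT z hz2 x ⟨hxne, hxcone⟩ hxr
      calc ‖f x - f z‖ ≤ K * ‖x - z‖ := this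
        _ ≤ K * (9/8 * sq n) := mul_le_mul_of_nonneg_left hx9 hK0.le
    have hfy : ‖f (y n) - f z‖ ≤ K * (9/8 * sq n) := by
      have := hT z hz2 (y n) ⟨hyne, hycone⟩ hyr
      calc ‖f (y n) - f z‖ ≤ K * ‖y n - z‖ := this
        _ ≤ K * (9/8 * sq n) := mul_le_mul_of_nonneg_left hy9 hK0.le
    have hchain : ‖f (y n) - f x‖ ≤ 9/4 * K * sq n := by
      calc ‖f (y n) - f x‖ ≤ ‖f (y n) - f z‖ + ‖f z - f x‖ :=
            norm_sub_le_norm_sub_add_norm_sub _ _ _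
        _ = ‖f (y n) - f z‖ + ‖f x - f z‖ := by rw [norm_sub_rev (f z)]
        _ ≤ K * (9/8 * sq n) + K * (9/8 * sq n) := add_le_add hfy hfx
        _ = 9/4 * K * sq n := by ring
    have hlow := hy2 n
    have hq : 9/4 * K * sq n = 144 * K / δ * t := by
      rw [hts]
      field_simp
      ring
    rw [← htdef] at hlow
    rw [hq] at hchain
    have : L * t = 144 * K / δ * t + t := by rw [hLdef]; ring
    rw [htdef] at hchain hlow
    simp only [hLdef] at hlow
    linarith [htpos n, hlow, hchain]

theorem stmt5 {X Y : Type*} [NormedAddCommGroup X] [NormedSpace ℝ X] [CompleteSpace X]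
    [TopologicalSpace.SeparableSpace X]
    [NormedAddCommGroup Y] [NormedSpace ℝ Y] [CompleteSpace Y]
    (G : Set X) (hG : IsOpen G) (f : X → Y) :
    SigmaDirPorous {x ∈ G |
      (∃ v ∈ sphere (0:X) 1, ∃ δ > (0:ℝ), ∃ K : ℝ, ∃ r > (0:ℝ),
        ∀ y ∈ OpenCone x v δ, ‖y - x‖ < r → ‖f y - f x‖ ≤ K * ‖y - x‖) ∧
      ¬ LipschitzAtPt f x} := by
  classical
  obtain ⟨D, hDc, hDd⟩ := TopologicalSpace.exists_countable_dense X
  haveI := hDc.to_subtype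
  haveI : Nonempty X := ⟨0⟩
  haveI : Nonempty ↥D := hDd.nonempty.to_subtype
  obtain ⟨e, he⟩ := exists_surjective_nat (↥D × ℚ × ℚ × ℚ)
  set A : Set X := {x ∈ G |
      (∃ v ∈ sphere (0:X) 1, ∃ δ > (0:ℝ), ∃ K : ℝ, ∃ r > (0:ℝ),
        ∀ y ∈ OpenCone x v δ, ‖y - x‖ < r → ‖f y - f x‖ ≤ K * ‖y - x‖) ∧
      ¬ LipschitzAtPt f x} with hA
  refine ⟨fun n => A ∩ {x : X |
      0 < ((e n).2.1 : ℝ) ∧ ((e n).2.1 : ℝ) ≤ 1 ∧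
      |‖((e n).1 : X)‖ - 1| ≤ ((e n).2.1 : ℝ) / 16 ∧
      1 ≤ ((e n).2.2.1 : ℝ) ∧ 0 < ((e n).2.2.2 : ℝ) ∧
      ∀ y ∈ OpenCone x ((e n).1 : X) ((e n).2.1 : ℝ), ‖y - x‖ < ((e n).2.2.2 : ℝ) →
        ‖f y - f x‖ ≤ ((e n).2.2.1 : ℝ) * ‖y - x‖}, ?_, ?_⟩
  · apply Subset.antisymm
    · intro x hx
      obtain ⟨hxG, ⟨v, hv, δ, hδ, K, r, hr, hcone⟩, hnl⟩ := id hx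
      rw [mem_sphere_zero_iff_norm] at hv
      obtain ⟨q, hq0, hq1⟩ := exists_rat_btwn (half_pos (lt_min hδ one_pos))
      obtain ⟨v', hv'b, hv'D⟩ := Metric.dense_iff.1 hDd v ((q:ℝ)/16) (by linarith)
      obtain ⟨Kq, hKq⟩ := exists_rat_gt (max K 1)
      obtain ⟨rq, hrq0, hrq1⟩ := exists_rat_btwn hr
      obtain ⟨n, hn⟩ := he (⟨v', hv'D⟩, q, Kq, rq)
      rw [mem_iUnion]
      refine ⟨n, hx, ?_⟩
      rw [mem_setOf_eq, hn]
      have hd : ‖v' - v‖ < (q:ℝ)/16 := by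
        have := mem_ball.1 hv'b
        rwa [dist_eq_norm] at this
      have hmin1 : min δ 1 ≤ 1 := min_le_right δ 1
      have hminδ : min δ 1 ≤ δ := min_le_left δ 1
      refine ⟨hq0, by linarith, ?_, ?_, hrq0, ?_⟩
      · calc |‖v'‖ - 1| = |‖v'‖ - ‖v‖| := by rw [hv]
          _ ≤ ‖v' - v‖ := abs_norm_sub_norm_le v' v
          _ ≤ (q:ℝ)/16 := hd.le
      · exact le_of_lt (lt_of_le_of_lt (le_max_right K 1) hKq)
      · intro w hw hwr
        obtain ⟨hwne, hwlt⟩ := hw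
        have hw2 : w ∈ OpenCone x v δ := by
          refine ⟨hwne, ?_⟩
          have tri : ‖v - ‖w - x‖⁻¹ • (w - x)‖ ≤
              ‖v - v'‖ + ‖v' - ‖w - x‖⁻¹ • (w - x)‖ := by
            have e' : v - ‖w - x‖⁻¹ • (w - x) =
                (v - v') + (v' - ‖w - x‖⁻¹ • (w - x)) := by abel
            rw [e']
            exact norm_add_le _ _
          have h2 : ‖v - v'‖ < (q:ℝ)/16 := by rwa [norm_sub_rev]
          linarith
        have hKle : K ≤ (Kq:ℝ) := le_of_lt (lt_of_le_of_lt (le_max_left K 1) hKq)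
        calc ‖f w - f x‖ ≤ K * ‖w - x‖ := hcone w hw2 (lt_trans hwr hrq1)
          _ ≤ (Kq:ℝ) * ‖w - x‖ := mul_le_mul_of_nonneg_right hKle (norm_nonneg _)
    · intro x hx
      rw [mem_iUnion] at hx
      obtain ⟨n, hx⟩ := hx
      exact hx.1
  · intro n x hx
    obtain ⟨hxA, h1, h2, h3, h4, h5, h6⟩ := hx
    exact piece_porous f _ _ _ _ h1 h2 h3 h4 h5 _
      (fun z hz => hz.2.2.2.2.2.2) x hxA.2.2
end

section
/- Let X be a separable Banach space, Y a Banach space, G ⊂ X open, and f : G → Y a mapping. Let M be the set of all x ∈ G at which f is Lipschitz and for which there exists v ∈ X such that the one-sided directional derivative f'_+(x,v) exists but the one-sided Hadamard directional derivative f'_{H+}(x,v) does not exist. Then M is σ-directionally porous. -/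
open Filter Metric Set Topology MeasureTheory

/-! Split the points where `f` is Lipschitz according to a common Lipschitz constant `K` and
radius `δ`. Fix such a piece `A` and a point `x ∈ A` where `f'_+(x,v) = y` exists but the
Hadamard quotients do not tend to `y`: there are `t → 0+` and `z` arbitrarily close to `v` with
`‖f (x + t z) - f x - t y‖ ≥ ε t`. If some `x' ∈ A` lay within `ρ t` of `x + t v` (with
`ρ = ε / 4K`), Lipschitz continuity at `x'` would give `‖f (x + t z) - f (x + t v)‖ ≤ 3εt/4`,
and together with `‖f (x + t v) - f x - t y‖ < ε t / 4` a contradiction. So the balls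
`B(x + t v, ρ t)` miss `A`; in particular `v ≠ 0`, since `x ∈ A`. -/

section

variable {X Y : Type*} [NormedAddCommGroup X] [NormedAddCommGroup Y]

def LipschitzAtPtWith (K δ : ℝ) (f : X → Y) (x : X) : Prop :=
  ∀ w ∈ ball x δ, ‖f w - f x‖ ≤ K * ‖w - x‖

variable {f : X → Y} {K δ : ℝ} {x : X}

theorem LipschitzAtPtWith.mono {K' δ' : ℝ} (h : LipschitzAtPtWith K δ f x) (hK : K ≤ K')
    (hδ : δ' ≤ δ) : LipschitzAtPtWith K' δ' f x := fun w hw =>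
  (h w (ball_subset_ball hδ hw)).trans (mul_le_mul_of_nonneg_right hK (norm_nonneg _))

theorem LipschitzAtPt.exists_nat (h : LipschitzAtPt f x) :
    ∃ n : ℕ, LipschitzAtPtWith (n + 1) (1 / (n + 1)) f x := by
  obtain ⟨K, -, δ, hδ, hK⟩ := h
  obtain ⟨m, hm⟩ := exists_nat_one_div_lt hδ
  refine ⟨max m ⌈K⌉₊, LipschitzAtPtWith.mono hK ?_ ?_⟩
  · exact (Nat.le_ceil K).trans (by exact_mod_cast (le_max_right m _).trans (Nat.le_succ _))
  · refine le_trans (one_div_le_one_div_of_le (by positivity) ?_) hm.le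
    exact_mod_cast Nat.succ_le_succ (le_max_left m _)

theorem LipschitzAtPtWith.norm_sub_le {x' a b : X} (h : LipschitzAtPtWith K δ f x')
    (ha : a ∈ ball x' δ) (hb : b ∈ ball x' δ) :
    ‖f a - f b‖ ≤ K * (dist a x' + dist b x') := by
  rw [← dist_eq_norm, dist_eq_norm a, dist_eq_norm b, mul_add]
  calc dist (f a) (f b) ≤ dist (f a) (f x') + dist (f b) (f x') := dist_triangle_right _ _ _
    _ ≤ K * ‖a - x'‖ + K * ‖b - x'‖ := by
      rw [dist_eq_norm, dist_eq_norm]; exact add_le_add (h a ha) (h b hb)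

end

theorem norm_inv_smul_sub {Y : Type*} [NormedAddCommGroup Y] [NormedSpace ℝ Y] {t : ℝ}
    (ht : 0 < t) (u y : Y) : ‖t⁻¹ • u - y‖ = t⁻¹ * ‖u - t • y‖ := by
  rw [← norm_smul_of_nonneg (inv_nonneg.2 ht.le), smul_sub, inv_smul_smul₀ ht.ne']

section

variable {X Y : Type*} [NormedAddCommGroup X] [NormedSpace ℝ X]
  [NormedAddCommGroup Y] [NormedSpace ℝ Y]

theorem DirPorousAt.of_frequently {A : Set X} {x v : X} {ρ : ℝ} (hx : x ∈ A) (hρ : 0 < ρ)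
    (h : ∃ᶠ t in 𝓝[>] (0 : ℝ), ball (x + t • v) (ρ * t) ∩ A = ∅) : DirPorousAt A x := by
  obtain ⟨t, ht, hball⟩ := exists_seq_forall_of_frequently (h.and_eventually self_mem_nhdsWithin)
  refine ⟨v, ?_, ρ, hρ, t, fun n => (hball n).2, ht.mono_right nhdsWithin_le_nhds,
    fun n => (hball n).1⟩
  rintro rfl
  have hx_ball : x ∈ ball (x + t 0 • (0 : X)) (ρ * t 0) := by
    simpa using mul_pos hρ (hball 0).2
  exact (hball 0).1.subset ⟨hx_ball, hx⟩

theorem frequently_ball_inter_eq_empty_of_not_hadamardPlusDerivAt {f : X → Y} {A : Set X}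
    {K δ : ℝ} (hK : 0 < K) (hδ : 0 < δ) (hA : ∀ x' ∈ A, LipschitzAtPtWith K δ f x')
    {x v : X} {y : Y}
    (hy : Tendsto (fun t : ℝ => t⁻¹ • (f (x + t • v) - f x)) (𝓝[>] 0) (𝓝 y))
    (hH : ¬ HadamardPlusDerivAt f x v y) :
    ∃ ρ > 0, ∃ᶠ t in 𝓝[>] (0 : ℝ), ball (x + t • v) (ρ * t) ∩ A = ∅ := by
  obtain ⟨ε, hε, hfar⟩ : ∃ ε > 0, ∃ᶠ p : ℝ × X in 𝓝[>] 0 ×ˢ 𝓝 v,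
      ε ≤ dist (p.1⁻¹ • (f (x + p.1 • p.2) - f x)) y := by
    simpa [HadamardPlusDerivAt, Metric.tendsto_nhds] using hH
  set ρ := ε / (4 * K)
  have hρ : 0 < ρ := by positivity
  have hfar_t : ∃ᶠ t in 𝓝[>] (0 : ℝ), ∃ z, dist z v < ρ ∧
      ε ≤ dist (t⁻¹ • (f (x + t • z) - f x)) y :=
    tendsto_fst.frequently <| (hfar.and_eventually (tendsto_snd.eventually (ball_mem_nhds v hρ))).mono
      fun p hp => ⟨p.2, hp.2, hp.1⟩
  have hnear : ∀ᶠ t in 𝓝[>] (0 : ℝ), 0 < t ∧ 2 * ρ * t < δ ∧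
      dist (t⁻¹ • (f (x + t • v) - f x)) y < ε / 4 := by
    refine Filter.Eventually.and self_mem_nhdsWithin
      (.and ?_ (Metric.tendsto_nhds.1 hy _ (by positivity)))
    filter_upwards [nhdsWithin_le_nhds (eventually_lt_nhds (by positivity : 0 < δ / (2 * ρ)))]
      with t ht
    rwa [lt_div_iff₀' (by positivity)] at ht
  refine ⟨ρ, hρ, (hfar_t.and_eventually hnear).mono ?_⟩
  rintro t ⟨⟨z, hz, hz_far⟩, ht, htδ, hv_near⟩
  refine eq_empty_iff_forall_notMem.2 fun x' ⟨hx'_ball, hx'⟩ => ?_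
  rw [dist_eq_norm, norm_inv_smul_sub ht, le_inv_mul_iff₀ ht] at hz_far
  rw [dist_eq_norm, norm_inv_smul_sub ht, inv_mul_lt_iff₀ ht] at hv_near
  have hb : dist (x + t • v) x' < ρ * t := by rwa [dist_comm]
  have ha : dist (x + t • z) x' < 2 * ρ * t := calc
    dist (x + t • z) x' ≤ dist (x + t • z) (x + t • v) + dist (x + t • v) x' := dist_triangle _ _ _
    _ = t * dist z v + dist (x + t • v) x' := by
      rw [dist_add_left, dist_smul₀, Real.norm_of_nonneg ht.le]
    _ < t * ρ + ρ * t := by gcongr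
    _ = 2 * ρ * t := by ring
  have hlip := (hA x' hx').norm_sub_le (ha.trans htδ) (hb.trans (by nlinarith))
  have hsplit : ‖f (x + t • z) - f x - t • y‖ ≤
      ‖f (x + t • z) - f (x + t • v)‖ + ‖f (x + t • v) - f x - t • y‖ := by
    rw [← sub_add_sub_cancel (f (x + t • z)) (f (x + t • v)), add_sub_assoc]
    exact norm_add_le _ _
  have hKρ : K * ρ = ε / 4 := by simp only [ρ]; field_simp
  nlinarith

end

theorem SigmaDirPorous.of_lipschitzAtPt {X Y : Type*} [NormedAddCommGroup X] [NormedSpace ℝ X]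
    [NormedAddCommGroup Y] {f : X → Y} {M : Set X} (hM : ∀ x ∈ M, LipschitzAtPt f x)
    (h : ∀ K δ : ℝ, 0 < K → 0 < δ → ∀ A ⊆ M, (∀ x ∈ A, LipschitzAtPtWith K δ f x) →
      ∀ x ∈ A, DirPorousAt A x) :
    SigmaDirPorous M := by
  refine ⟨fun n : ℕ => M ∩ {x | LipschitzAtPtWith (n + 1) (1 / (n + 1)) f x}, ?_,
    fun n => h _ _ (by positivity) (by positivity) _ inter_subset_left fun _ hx => hx.2⟩
  ext x
  simp only [mem_iUnion, mem_inter_iff, mem_ofPred_eq]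
  exact ⟨fun hx => (hM x hx).exists_nat.imp fun _ hn => ⟨hx, hn⟩, fun ⟨_, hx, _⟩ => hx⟩

theorem stmt6_general {X Y : Type*} [NormedAddCommGroup X] [NormedSpace ℝ X]
    [NormedAddCommGroup Y] [NormedSpace ℝ Y]
    (G : Set X) (f : X → Y) :
    SigmaDirPorous {x ∈ G | LipschitzAtPt f x ∧ ∃ v : X,
      (∃ y : Y, Tendsto (fun t : ℝ => t⁻¹ • (f (x + t • v) - f x)) (𝓝[>] (0:ℝ)) (𝓝 y)) ∧
      ¬ (∃ y : Y, HadamardPlusDerivAt f x v y)} := by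
  refine SigmaDirPorous.of_lipschitzAtPt (fun x hx => hx.2.1)
    fun K δ hK hδ A hAM hA x hx => ?_
  obtain ⟨-, -, v, ⟨y, hy⟩, hH⟩ := hAM hx
  obtain ⟨ρ, hρ, hmiss⟩ :=
    frequently_ball_inter_eq_empty_of_not_hadamardPlusDerivAt hK hδ hA hy fun h => hH ⟨y, h⟩
  exact DirPorousAt.of_frequently hx hρ hmiss

theorem stmt6 {X Y : Type*} [NormedAddCommGroup X] [NormedSpace ℝ X] [CompleteSpace X]
    [TopologicalSpace.SeparableSpace X]
    [NormedAddCommGroup Y] [NormedSpace ℝ Y] [CompleteSpace Y]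
    (G : Set X) (hG : IsOpen G) (f : X → Y) :
    SigmaDirPorous {x ∈ G | LipschitzAtPt f x ∧ ∃ v : X,
      (∃ y : Y, Tendsto (fun t : ℝ => t⁻¹ • (f (x + t • v) - f x)) (𝓝[>] (0:ℝ)) (𝓝 y)) ∧
      ¬ (∃ y : Y, HadamardPlusDerivAt f x v y)} :=
  stmt6_general G f
end

section
/- Let X be a separable Banach space, Y a Banach space, G ⊂ X open, and f : G → Y a mapping. Then the set of all points x ∈ G at which f is Lipschitz at x and Gâteaux differentiable at x but not Hadamard differentiable at x is σ-directionally porous. -/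
open Filter Metric Set Topology MeasureTheory

/-!
Sort the points by a uniform Lipschitz constant `K` and radius `δ`; countably many choices
suffice. Fix such a piece `S` and `x ∈ S` at which `f` has Gâteaux derivative `L` but no
Hadamard derivative. Since `f` is Lipschitz at `x`, the Hadamard derivative in direction `0`
exists, and splitting `t → 0` into `t → 0±` yields `v ≠ 0`, `ε > 0`, `tₙ ↓ 0` and `zₙ → v` with
`(f (x + tₙ zₙ) - f x) / tₙ` at distance at least `ε` from `L v`. The Gâteaux quotients along `v`
are eventually within `ε / 4` of `L v`, so `‖f (x + tₙ zₙ) - f (x + tₙ v)‖ ≥ 3 ε tₙ / 4`. A point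
`y ∈ S` within `p tₙ` of `x + tₙ v` would bound this by `3 K p tₙ` through the Lipschitz estimate
at `y`; for `p = ε / (8 K)` there is no such `y`, so `S` is directionally porous at `x`.
-/

section

variable {X Y : Type*} [NormedAddCommGroup X] [NormedAddCommGroup Y]

def lipschitzAtPtSet (f : X → Y) (K δ : ℝ) : Set X :=
  {y | ∀ y' ∈ ball y δ, ‖f y' - f y‖ ≤ K * ‖y' - y‖}

theorem LipschitzAtPt.exists_nat_mem_lipschitzAtPtSet {f : X → Y} {x : X}
    (h : LipschitzAtPt f x) :
    ∃ k m : ℕ, x ∈ lipschitzAtPtSet f (k + 1) (1 / (m + 1)) := by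
  obtain ⟨K, -, δ, hδ, hlip⟩ := h
  obtain ⟨k, hk⟩ := exists_nat_ge K
  obtain ⟨m, hm⟩ := exists_nat_one_div_lt hδ
  refine ⟨k, m, fun y hy => ?_⟩
  calc ‖f y - f x‖ ≤ K * ‖y - x‖ := hlip y (ball_subset_ball hm.le hy)
    _ ≤ (k + 1) * ‖y - x‖ := by gcongr; linarith

theorem norm_sub_le_of_mem_lipschitzAtPtSet {f : X → Y} {K δ : ℝ} {y a b : X}
    (hy : y ∈ lipschitzAtPtSet f K δ) (ha : dist a y < δ) (hb : dist b y < δ) :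
    ‖f a - f b‖ ≤ K * (dist a y + dist b y) := by
  rw [dist_eq_norm, dist_eq_norm]
  calc ‖f a - f b‖ = ‖(f a - f y) - (f b - f y)‖ := by rw [sub_sub_sub_cancel_right]
    _ ≤ ‖f a - f y‖ + ‖f b - f y‖ := norm_sub_le _ _
    _ ≤ K * ‖a - y‖ + K * ‖b - y‖ := add_le_add (hy a ha) (hy b hb)
    _ = K * (‖a - y‖ + ‖b - y‖) := by ring

variable [NormedSpace ℝ X] [NormedSpace ℝ Y]

theorem LipschitzAtPt.hadamardDerivAt_zero {f : X → Y} {x : X} (h : LipschitzAtPt f x) :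
    HadamardDerivAt f x 0 0 := by
  obtain ⟨K, hK, δ, hδ, hlip⟩ := h
  have hsmall : Tendsto (fun q : ℝ × X => q.1 • q.2) ((𝓝[≠] (0:ℝ)) ×ˢ 𝓝 0) (𝓝 0) := by
    simpa using (tendsto_fst.mono_right nhdsWithin_le_nhds).smul
      (tendsto_snd : Tendsto Prod.snd ((𝓝[≠] (0:ℝ)) ×ˢ 𝓝 (0:X)) _)
  have hbound : Tendsto (fun q : ℝ × X => K * ‖q.2‖) ((𝓝[≠] (0:ℝ)) ×ˢ 𝓝 0) (𝓝 0) := by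
    simpa using (tendsto_norm_zero.comp tendsto_snd).const_mul K
  refine squeeze_zero_norm' ?_ hbound
  filter_upwards [hsmall (ball_mem_nhds 0 hδ)] with ⟨t, z⟩ htz
  have hmem : x + t • z ∈ ball x δ := by simpa using htz
  rcases eq_or_ne t 0 with rfl | ht
  · simp only [inv_zero, zero_smul, norm_zero]; positivity
  calc ‖t⁻¹ • (f (x + t • z) - f x)‖ = |t|⁻¹ * ‖f (x + t • z) - f x‖ := by
        rw [norm_smul, norm_inv, Real.norm_eq_abs]
    _ ≤ |t|⁻¹ * (K * (|t| * ‖z‖)) := by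
        gcongr
        simpa [norm_smul] using hlip _ hmem
    _ = K * ‖z‖ := by field_simp

theorem HadamardPlusDerivAt.hadamardDerivAt {f : X → Y} {x v : X} {y : Y}
    (hpos : HadamardPlusDerivAt f x v y) (hneg : HadamardPlusDerivAt f x (-v) (-y)) :
    HadamardDerivAt f x v y := by
  have hmirror : Tendsto (fun t : ℝ => -t) (𝓝[<] 0) (𝓝[>] 0) :=
    tendsto_nhdsWithin_iff.2 ⟨by simpa using (tendsto_neg (0:ℝ)).mono_left nhdsWithin_le_nhds,
      eventually_nhdsWithin_of_forall fun t (ht : t < 0) => neg_pos.2 ht⟩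
  have hflip : Tendsto (fun q : ℝ × X => (-q.1, -q.2)) ((𝓝[<] 0) ×ˢ 𝓝 v) ((𝓝[>] 0) ×ˢ 𝓝 (-v)) :=
    (hmirror.comp tendsto_fst).prodMk ((tendsto_neg v).comp tendsto_snd)
  have hleft : Tendsto (fun q : ℝ × X => q.1⁻¹ • (f (x + q.1 • q.2) - f x))
      ((𝓝[<] 0) ×ˢ 𝓝 v) (𝓝 y) := by
    simpa [Function.comp_def, inv_neg, neg_smul] using (hneg.comp hflip).neg
  rw [HadamardDerivAt, ← nhdsLT_sup_nhdsGT, sup_prod]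
  exact hleft.sup hpos

theorem exists_ne_zero_not_hadamardPlusDerivAt {f : X → Y} {x : X} {L : X →L[ℝ] Y}
    (hlip : LipschitzAtPt f x) (hL : ¬ HadamardDiffAt f x L) :
    ∃ v ≠ 0, ¬ HadamardPlusDerivAt f x v (L v) := by
  by_contra! h
  refine hL fun v => ?_
  rcases eq_or_ne v 0 with rfl | hv
  · simpa using hlip.hadamardDerivAt_zero
  · exact (h v hv).hadamardDerivAt (by simpa using h (-v) (neg_ne_zero.2 hv))

theorem dirPorousAt_of_frequently {A : Set X} {x v : X} {p : ℝ} (hv : v ≠ 0) (hp : 0 < p)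
    (h : ∃ᶠ t in 𝓝[>] (0:ℝ), ball (x + t • v) (p * t) ∩ A = ∅) : DirPorousAt A x := by
  obtain ⟨t, ht, hball⟩ := exists_seq_forall_of_frequently (h.and_eventually self_mem_nhdsWithin)
  exact ⟨v, hv, p, hp, t, fun n => (hball n).2, ht.mono_right nhdsWithin_le_nhds,
    fun n => (hball n).1⟩

theorem ball_inter_lipschitzAtPtSet_eq_empty {f : X → Y} {K δ ε p t : ℝ}
    {x v z : X} {w : Y} (hK : 0 ≤ K) (ht : 0 < t)
    (htδ : 2 * p * t < δ) (hKp : 8 * K * p ≤ ε) (hz : dist z v < p)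
    (hgat : ‖t⁻¹ • (f (x + t • v) - f x) - w‖ < ε / 4)
    (hfar : ε ≤ ‖t⁻¹ • (f (x + t • z) - f x) - w‖) :
    ball (x + t • v) (p * t) ∩ lipschitzAtPtSet f K δ = ∅ := by
  refine eq_empty_iff_forall_notMem.2 fun y ⟨hyc, hyS⟩ => ?_
  set c := x + t • v
  set U := x + t • z
  have hUc : dist U c < p * t := by
    rw [dist_add_left, dist_smul₀, Real.norm_of_nonneg ht.le, mul_comm p]
    exact mul_lt_mul_of_pos_left hz ht
  have hcy : dist c y < p * t := by rw [dist_comm]; exact hyc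
  have hUy : dist U y < 2 * p * t := by linarith [dist_triangle U c y]
  have hpt : 0 < p * t := dist_nonneg.trans_lt hcy
  have hupper : ‖f U - f c‖ ≤ K * (3 * p * t) :=
    (norm_sub_le_of_mem_lipschitzAtPtSet hyS (by linarith) (by linarith)).trans
      (by gcongr; linarith)
  have hlower : t * (ε - ε / 4) ≤ ‖f U - f c‖ := by
    have hsplit : t⁻¹ • (f U - f c) = (t⁻¹ • (f U - f x) - w) - (t⁻¹ • (f c - f x) - w) := by
      rw [smul_sub, smul_sub, smul_sub]; abel
    calc t * (ε - ε / 4) ≤ t * ‖t⁻¹ • (f U - f c)‖ := by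
          gcongr
          rw [hsplit]
          linarith [norm_sub_norm_le (t⁻¹ • (f U - f x) - w) (t⁻¹ • (f c - f x) - w)]
      _ = ‖f U - f c‖ := by
          rw [norm_smul, norm_inv, Real.norm_of_nonneg ht.le, mul_inv_cancel_left₀ ht.ne']
  have hε : 0 < ε := by linarith [norm_nonneg (t⁻¹ • (f c - f x) - w)]
  nlinarith

theorem dirPorousAt_of_not_hadamardPlusDerivAt {f : X → Y} {S : Set X} {K δ : ℝ} {x v : X}
    {w : Y} (hS : S ⊆ lipschitzAtPtSet f K δ) (hK : 0 < K) (hδ : 0 < δ) (hv : v ≠ 0)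
    (hD : Tendsto (fun t : ℝ => t⁻¹ • (f (x + t • v) - f x)) (𝓝[>] 0) (𝓝 w))
    (hH : ¬ HadamardPlusDerivAt f x v w) : DirPorousAt S x := by
  obtain ⟨ε, hε, hfar⟩ : ∃ ε > 0, ∃ᶠ q in (𝓝[>] (0:ℝ)) ×ˢ 𝓝 v,
      ε ≤ ‖q.1⁻¹ • (f (x + q.1 • q.2) - f x) - w‖ := by
    simpa [HadamardPlusDerivAt, Metric.tendsto_nhds, dist_eq_norm] using hH
  set p := ε / (8 * K)
  have hp : 0 < p := by positivity
  have hKp : 8 * K * p ≤ ε := by rw [mul_div_cancel₀ _ (by positivity)]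
  have hnear : ∀ᶠ t in 𝓝[>] (0:ℝ), 0 < t ∧ 2 * p * t < δ ∧
      ‖t⁻¹ • (f (x + t • v) - f x) - w‖ < ε / 4 := by
    have hsmall : ∀ᶠ t in 𝓝[>] (0:ℝ), 2 * p * t < δ :=
      nhdsWithin_le_nhds (((continuous_const.mul continuous_id).tendsto' 0 0 (by simp)).eventually
        (gt_mem_nhds hδ))
    filter_upwards [self_mem_nhdsWithin, hsmall,
      Metric.tendsto_nhds.1 hD (ε / 4) (by positivity)] with t ht htδ hgat
    exact ⟨ht, htδ, by rwa [dist_eq_norm] at hgat⟩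
  have hempty : ∃ᶠ q in (𝓝[>] (0:ℝ)) ×ˢ 𝓝 v, ball (x + q.1 • v) (p * q.1) ∩ S = ∅ := by
    refine (hfar.and_eventually ((tendsto_fst.eventually hnear).and
      (tendsto_snd.eventually (ball_mem_nhds v hp)))).mono ?_
    rintro ⟨t, z⟩ ⟨hquot, ⟨ht, htδ, hgat⟩, hz⟩
    exact subset_eq_empty (inter_subset_inter_right _ hS)
      (ball_inter_lipschitzAtPtSet_eq_empty hK.le ht htδ hKp hz hgat hquot)
  exact dirPorousAt_of_frequently hv hp (tendsto_fst.frequently hempty)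

theorem sigmaDirPorous_of_subset_iUnion {ι : Type*} [Countable ι] [Nonempty ι] {A : Set X}
    {T : ι → Set X} (hA : A ⊆ ⋃ i, T i) (hT : ∀ i, ∀ x ∈ A ∩ T i, DirPorousAt (A ∩ T i) x) :
    SigmaDirPorous A := by
  obtain ⟨e, he⟩ := exists_surjective_nat ι
  refine ⟨fun n => A ∩ T (e n), ?_, fun n => hT (e n)⟩
  rw [← inter_iUnion, he.iUnion_comp T, inter_eq_left.2 hA]

end

theorem stmt7_general {X Y : Type*} [NormedAddCommGroup X] [NormedSpace ℝ X]
    [NormedAddCommGroup Y] [NormedSpace ℝ Y]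
    (G : Set X) (f : X → Y) :
    SigmaDirPorous {x ∈ G | LipschitzAtPt f x ∧
      (∃ L : X →L[ℝ] Y, GateauxDiffAt f x L) ∧
      ¬ (∃ L : X →L[ℝ] Y, HadamardDiffAt f x L)} := by
  refine sigmaDirPorous_of_subset_iUnion
    (T := fun km : ℕ × ℕ => lipschitzAtPtSet f (km.1 + 1) (1 / (km.2 + 1))) ?_ ?_
  · rintro x ⟨-, hlip, -⟩
    obtain ⟨k, m, hx⟩ := hlip.exists_nat_mem_lipschitzAtPtSet
    exact mem_iUnion.2 ⟨(k, m), hx⟩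
  · rintro ⟨k, m⟩ x ⟨⟨-, hlip, ⟨L, hL⟩, hH⟩, -⟩
    obtain ⟨v, hv, hvH⟩ := exists_ne_zero_not_hadamardPlusDerivAt hlip fun h => hH ⟨L, h⟩
    exact dirPorousAt_of_not_hadamardPlusDerivAt inter_subset_right (by positivity)
      (by positivity) hv ((hL v).mono_left (nhdsGT_le_nhdsNE 0)) hvH

theorem stmt7 {X Y : Type*} [NormedAddCommGroup X] [NormedSpace ℝ X] [CompleteSpace X]
    [TopologicalSpace.SeparableSpace X]
    [NormedAddCommGroup Y] [NormedSpace ℝ Y] [CompleteSpace Y]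
    (G : Set X) (hG : IsOpen G) (f : X → Y) :
    SigmaDirPorous {x ∈ G | LipschitzAtPt f x ∧
      (∃ L : X →L[ℝ] Y, GateauxDiffAt f x L) ∧
      ¬ (∃ L : X →L[ℝ] Y, HadamardDiffAt f x L)} :=
  stmt7_general G f
end

section
/- In a finite-dimensional normed space X, a set A ⊂ X that is porous at a point x (i.e., there exist p > 0 and points y_n → x with B(y_n, p·‖y_n − x‖) ∩ A = ∅) is directionally porous at x, i.e., there exist v ≠ 0, q > 0 and positive reals t_n → 0 with B(x + t_n v, q·t_n) ∩ A = ∅. -/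
open Filter Metric Set Topology MeasureTheory

theorem stmt12 {X : Type*} [NormedAddCommGroup X] [NormedSpace ℝ X]
    [FiniteDimensional ℝ X]
    (A : Set X) (x : X) (h : PorousAt A x) :
    DirPorousAt A x := by
  obtain ⟨p, hp, y, hyne, hy, hball⟩ := h
  set u : ℕ → X := fun n => ‖y n - x‖⁻¹ • (y n - x) with hu
  have hnorm : ∀ n, ‖y n - x‖ ≠ 0 := fun n => by
    simpa [sub_eq_zero] using hyne n
  have husphere : ∀ n, u n ∈ sphere (0:X) 1 := fun n => by
    simp [hu, norm_smul, inv_mul_cancel₀ (hnorm n)]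
  obtain ⟨v, hv, φ, hφ, huv⟩ := (isCompact_sphere (0:X) 1).tendsto_subseq husphere
  have hvne : v ≠ 0 := by
    intro h0
    rw [h0] at hv
    simp at hv
  rw [Metric.tendsto_atTop] at huv
  obtain ⟨N, hN⟩ := huv (p/2) (by linarith)
  refine ⟨v, hvne, p/2, by linarith, fun n => ‖y (φ (n + N)) - x‖,
    fun n => norm_sub_pos_iff.mpr (hyne _), ?_, fun n => ?_⟩
  · have h1 : Tendsto (fun n => y (φ (n + N))) atTop (𝓝 x) :=
      hy.comp (hφ.tendsto_atTop.comp (tendsto_add_atTop_nat N))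
    simpa using (h1.sub_const x).norm
  · set m := φ (n + N) with hm
    set t := ‖y m - x‖ with ht'
    have ht : 0 < t := norm_sub_pos_iff.mpr (hyne m)
    have hym : y m = x + t • u m := by
      simp [hu, ht', smul_smul, mul_inv_cancel₀ (hnorm m)]
    ext z
    simp only [mem_inter_iff, mem_ball, mem_empty_iff_false, iff_false, not_and]
    intro hz1 hz2
    have hdu : dist (u m) v < p/2 := hN (n + N) (Nat.le_add_left N n)
    have h2 : dist (x + t • v) (y m) < p/2 * t := by
      rw [hym, dist_eq_norm]
      have : (x + t • v) - (x + t • u m) = t • (v - u m) := by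
        rw [smul_sub]; abel
      rw [this, norm_smul, Real.norm_eq_abs, abs_of_pos ht]
      have hrev : ‖v - u m‖ = dist (u m) v := by
        rw [dist_eq_norm, norm_sub_rev]
      rw [hrev]
      nlinarith
    have hdist : dist z (y m) < p * t :=
      calc dist z (y m) ≤ dist z (x + t • v) + dist (x + t • v) (y m) :=
            dist_triangle _ _ _
        _ < p/2 * t + p/2 * t := add_lt_add hz1 h2
        _ = p * t := by ring
    have : z ∈ ball (y m) (p * ‖y m - x‖) ∩ A := ⟨by simpa [ht'] using hdist, hz2⟩
    rw [hball m] at this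
    exact this
end

section
/- There exists an everywhere differentiable function f : ℝ → ℝ and a closed set F ⊂ ℝ of positive Lebesgue measure with empty interior such that f vanishes on F and f is not Lipschitz at any point of F that is an accumulation point of the complement of F from an adjacent interval endpoint; in particular, the largest open set on which f is locally Lipschitz is ℝ \ F, and F is not σ-porous. -/
/-!
Choose an open set `G ⊇ ℚ` of finite measure, let `F = ℝ \ G`, and let `h ≥ 0` be a smooth
function with support `G`. Put `f = φ ∘ h` with `φ t = t² sin (t⁻²)`. Since `φ` is differentiable
with `φ' 0 = 0`, `f` is differentiable, and it is `C¹` on `G`. Near `x ∈ F` pick `y ∈ G`: on the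
segment from `y` to `x`, `h` runs through every level in `(0, h y]`, in particular through the
points `τₘ = (π (m + 1/2))^(-1/2)` where `φ τₘ = (-1)ᵐ τₘ²`. As `∑ τₘ² = ∞`, `f` has infinite
variation on that segment, so it is not Lipschitz near `x`. Porous sets are null by the Lebesgue
density theorem, while `F` has infinite measure, so `F` is not σ-porous.
-/

open Filter Metric Set Topology MeasureTheory

open scoped NNReal ENNReal
open Module Real Finset

section Porosity

variable {E : Type*} [NormedAddCommGroup E] [NormedSpace ℝ E] [FiniteDimensional ℝ E]
  [MeasurableSpace E] [BorelSpace E] (μ : Measure E) [μ.IsAddHaarMeasure]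

lemma measure_inter_closedBall_div_le_of_ball_inter_eq_empty {A : Set E} {x y : E} (hxy : y ≠ x)
    {p : ℝ} (hp : 0 < p) (hA : ball y (p * ‖y - x‖) ∩ A = ∅) :
    μ (A ∩ closedBall x ((1 + p) * ‖y - x‖)) / μ (closedBall x ((1 + p) * ‖y - x‖)) ≤
      ENNReal.ofReal (1 - (p / (1 + p)) ^ finrank ℝ E) := by
  set d := ‖y - x‖
  have hd : 0 < d := norm_pos_iff.2 (sub_ne_zero.2 hxy)
  set R := (1 + p) * d
  have hR : 0 < R := by positivity
  have hball : ball y (p * d) ⊆ closedBall x R := fun z hz => by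
    rw [mem_ball] at hz
    rw [mem_closedBall]
    calc dist z x ≤ dist z y + dist y x := dist_triangle _ _ _
      _ ≤ R := by rw [dist_eq_norm y x]; simp only [R]; linarith
  have hsub : A ∩ closedBall x R ⊆ closedBall x R \ ball y (p * d) := fun z hz =>
    ⟨hz.2, fun hzb => (Set.eq_empty_iff_forall_notMem.1 hA) z ⟨hzb, hz.1⟩⟩
  have hc₀ : μ (ball (0 : E) 1) ≠ 0 := (measure_ball_pos μ 0 one_pos).ne'
  have hc : μ (ball (0 : E) 1) ≠ ∞ := measure_ball_lt_top.ne
  calc μ (A ∩ closedBall x R) / μ (closedBall x R)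
      ≤ μ (closedBall x R \ ball y (p * d)) / μ (closedBall x R) :=
        ENNReal.div_le_div_right (measure_mono hsub) _
    _ = ENNReal.ofReal (R ^ finrank ℝ E - (p * d) ^ finrank ℝ E) /
          ENNReal.ofReal (R ^ finrank ℝ E) := by
      rw [measure_sdiff hball measurableSet_ball.nullMeasurableSet measure_ball_lt_top.ne,
        Measure.addHaar_closedBall μ x hR.le, Measure.addHaar_ball_of_pos μ y (by positivity),
        ← ENNReal.sub_mul (fun _ _ => hc), ← ENNReal.ofReal_sub _ (by positivity),
        ENNReal.mul_div_mul_right _ _ hc₀ hc]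
    _ = ENNReal.ofReal (1 - (p / (1 + p)) ^ finrank ℝ E) := by
      rw [← ENNReal.ofReal_div_of_pos (by positivity), sub_div, div_self (by positivity),
        ← div_pow]
      congr 3
      simp only [R]
      field_simp

lemma PorousAt.not_tendsto_density {A : Set E} {x : E} (hA : PorousAt A x) :
    ¬ Tendsto (fun r => μ (A ∩ closedBall x r) / μ (closedBall x r)) (𝓝[>] 0) (𝓝 1) := by
  obtain ⟨p, hp, y, hyx, hy, hyA⟩ := hA
  have hR : Tendsto (fun n => (1 + p) * ‖y n - x‖) atTop (𝓝[>] 0) := by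
    refine tendsto_nhdsWithin_of_tendsto_nhds_of_eventually_within _ ?_
      (Eventually.of_forall fun n => ?_)
    · simpa using ((tendsto_iff_norm_sub_tendsto_zero.1 hy).const_mul (1 + p))
    · have := norm_pos_iff.2 (sub_ne_zero.2 (hyx n)); exact mem_Ioi.2 (by positivity)
  intro h1
  have hlt : ENNReal.ofReal (1 - (p / (1 + p)) ^ finrank ℝ E) < 1 := by
    rw [ENNReal.ofReal_lt_one]; have : 0 < p / (1 + p) := by positivity
    linarith [pow_pos this (finrank ℝ E)]
  exact hlt.not_ge <| le_of_tendsto (h1.comp hR) <| Eventually.of_forall fun n =>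
    measure_inter_closedBall_div_le_of_ball_inter_eq_empty μ (hyx n) hp (hyA n)

theorem measure_eq_zero_of_forall_porousAt {A : Set E} (hA : ∀ x ∈ A, PorousAt A x) :
    μ A = 0 := by
  rw [← Measure.restrict_apply_self]
  exact measure_mono_null (fun x hx => (hA x hx).not_tendsto_density μ)
    (ae_iff.1 (Besicovitch.ae_tendsto_measure_inter_div μ A))

theorem SigmaPorous.measure_eq_zero {A : Set E} (hA : SigmaPorous A) : μ A = 0 := by
  obtain ⟨S, rfl, hS⟩ := hA
  exact measure_iUnion_null fun n => measure_eq_zero_of_forall_porousAt μ (hS n)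

end Porosity

noncomputable def sqMulSinInvSq (t : ℝ) : ℝ := t ^ 2 * sin (t ^ 2)⁻¹

@[simp]
lemma sqMulSinInvSq_zero : sqMulSinInvSq 0 = 0 := by simp [sqMulSinInvSq]

lemma abs_sqMulSinInvSq_le (t : ℝ) : |sqMulSinInvSq t| ≤ t ^ 2 := by
  rw [sqMulSinInvSq, abs_mul, abs_of_nonneg (sq_nonneg t)]
  exact mul_le_of_le_one_right (sq_nonneg t) (abs_sin_le_one _)

lemma hasDerivAt_sqMulSinInvSq_zero : HasDerivAt sqMulSinInvSq 0 0 := by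
  rw [hasDerivAt_iff_isLittleO, Asymptotics.isLittleO_iff]
  intro c hc
  filter_upwards [Metric.ball_mem_nhds 0 hc] with t ht
  rw [mem_ball, dist_zero_right, norm_eq_abs] at ht
  simpa [sq, abs_mul_abs_self] using (abs_sqMulSinInvSq_le t).trans
    (by rw [← sq_abs, sq]; exact mul_le_mul_of_nonneg_right ht.le (abs_nonneg t))

lemma contDiffAt_sqMulSinInvSq {n : WithTop ℕ∞} {t : ℝ} (ht : t ≠ 0) :
    ContDiffAt ℝ n sqMulSinInvSq t :=
  (contDiffAt_id.pow 2).mul (contDiff_sin.contDiffAt.comp t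
    ((contDiffAt_id.pow 2).inv (pow_ne_zero 2 ht)))

lemma differentiable_sqMulSinInvSq : Differentiable ℝ sqMulSinInvSq := fun t => by
  rcases eq_or_ne t 0 with rfl | ht
  · exact hasDerivAt_sqMulSinInvSq_zero.differentiableAt
  · exact (contDiffAt_sqMulSinInvSq (n := 1) ht).differentiableAt one_ne_zero

lemma sqMulSinInvSq_inv_sqrt (m : ℕ) :
    sqMulSinInvSq (√(π * (m + 1 / 2)))⁻¹ = (-1) ^ m * (π * (m + 1 / 2))⁻¹ := by
  have hpos : 0 < π * (m + 1 / 2) := by positivity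
  rw [sqMulSinInvSq, inv_pow, sq_sqrt hpos.le, inv_inv,
    show π * (m + 1 / 2) = m * π + π / 2 by ring, sin_add_pi_div_two, cos_nat_mul_pi, mul_comm]

lemma exists_antitone_sum_abs_sub_sqMulSinInvSq_gt {t : ℝ} (ht : 0 < t) (C : ℝ) :
    ∃ s : ℕ → ℝ, Antitone s ∧ (∀ n, 0 ≤ s n) ∧ s 0 ≤ t ∧
      ∃ N, C < ∑ i ∈ range N, |sqMulSinInvSq (s (i + 1)) - sqMulSinInvSq (s i)| := by
  obtain ⟨m, hm⟩ := exists_nat_ge (t⁻¹ ^ 2)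
  set s : ℕ → ℝ := fun i => (√(π * ((m + i : ℕ) + 1 / 2)))⁻¹
  have hharm :
      Tendsto (fun N => (π * (m + 1))⁻¹ * ∑ i ∈ range N, (1 / (i + 1) : ℝ)) atTop atTop :=
    tendsto_sum_range_one_div_nat_succ_atTop.const_mul_atTop (by positivity)
  obtain ⟨N, hN⟩ := (hharm.eventually_gt_atTop C).exists
  refine ⟨s, fun i j hij => ?_, fun i => by positivity, ?_, N, hN.trans_le ?_⟩
  · refine inv_anti₀ (by positivity) (sqrt_le_sqrt ?_)
    gcongr
  · rw [inv_le_comm₀ (by positivity) ht, le_sqrt (by positivity) (by positivity)]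
    have := pi_gt_three
    push_cast
    nlinarith
  · rw [mul_sum]
    refine sum_le_sum fun i _ => ?_
    have hterm : |sqMulSinInvSq (s (i + 1)) - sqMulSinInvSq (s i)| =
        (π * ((m + (i + 1) : ℕ) + 1 / 2))⁻¹ + (π * ((m + i : ℕ) + 1 / 2))⁻¹ := by
      simp only [s, sqMulSinInvSq_inv_sqrt, show m + (i + 1) = m + i + 1 from rfl, pow_succ]
      rw [show ∀ a b c : ℝ, a * -1 * b - a * c = -(a * (b + c)) by intros; ring, abs_neg,
        abs_mul, abs_pow, abs_neg, abs_one, one_pow, one_mul, abs_of_pos (by positivity)]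
    rw [hterm]
    have : (π * (m + 1))⁻¹ * (1 / (i + 1)) ≤ (π * ((m + i : ℕ) + 1 / 2))⁻¹ := by
      rw [one_div, ← mul_inv, mul_assoc]
      refine inv_anti₀ (by positivity) ?_
      push_cast
      gcongr
      nlinarith
    linarith [show 0 ≤ (π * ((m + (i + 1) : ℕ) + 1 / 2))⁻¹ by positivity]

lemma LipschitzOnWith.sum_abs_sub_comp_le {g h : ℝ → ℝ} {K : ℝ≥0} {x y : ℝ}
    (hlip : LipschitzOnWith K (g ∘ h) (uIcc x y)) (hh : ContinuousOn h (uIcc x y))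
    {s : ℕ → ℝ} (hs : Antitone s) (hsx : ∀ n, h x ≤ s n) (hsy : s 0 ≤ h y) (N : ℕ) :
    ∑ i ∈ range N, |g (s (i + 1)) - g (s i)| ≤ K * |y - x| := by
  -- Walk from `y` towards `x`, meeting the levels `s 0, s 1, …` in turn.
  suffices ∀ N, ∃ z ∈ uIcc x y, h z = s N ∧
      ∑ i ∈ range N, |g (s (i + 1)) - g (s i)| ≤ K * (|y - x| - |z - x|) by
    obtain ⟨z, -, -, hz⟩ := this N
    exact hz.trans (by nlinarith [abs_nonneg (z - x), K.coe_nonneg])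
  intro N
  induction N with
  | zero =>
    obtain ⟨z, hz, hzs⟩ := intermediate_value_uIcc hh (mem_uIcc_of_le (hsx 0) hsy)
    refine ⟨z, hz, hzs, ?_⟩
    simpa using mul_nonneg K.coe_nonneg (sub_nonneg.2 (abs_sub_left_of_mem_uIcc hz))
  | succ N ih =>
    obtain ⟨z, hz, hzs, hsum⟩ := ih
    have hsub : uIcc x z ⊆ uIcc x y := uIcc_subset_uIcc_left hz
    obtain ⟨z', hz', hz's⟩ :=
      intermediate_value_uIcc (hh.mono hsub) (mem_uIcc_of_le (hsx _) (hzs ▸ hs N.le_succ))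
    have hstep : |g (s (N + 1)) - g (s N)| ≤ K * |z' - z| := by
      simpa [← hz's, ← hzs, Real.dist_eq] using hlip.dist_le_mul z' (hsub hz') z hz
    have hdist : |z' - z| = |z - x| - |z' - x| := by
      rcases mem_uIcc.1 hz' with ⟨h₁, h₂⟩ | ⟨h₁, h₂⟩
      · rw [abs_of_nonpos (by linarith), abs_of_nonneg (by linarith), abs_of_nonneg (by linarith)]
        ring
      · rw [abs_of_nonneg (by linarith), abs_of_nonpos (by linarith), abs_of_nonpos (by linarith)]
        ring
    refine ⟨z', hsub hz', hz's, ?_⟩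
    rw [hdist] at hstep
    rw [sum_range_succ]
    linarith

theorem not_lipschitzOnWith_sqMulSinInvSq_comp {h : ℝ → ℝ} {x y : ℝ}
    (hh : ContinuousOn h (uIcc x y)) (hx : h x = 0) (hy : 0 < h y) (K : ℝ≥0) :
    ¬ LipschitzOnWith K (sqMulSinInvSq ∘ h) (uIcc x y) := fun hlip => by
  obtain ⟨s, hs, hs₀, hsy, N, hN⟩ :=
    exists_antitone_sum_abs_sub_sqMulSinInvSq_gt hy (K * |y - x|)
  exact hN.not_ge (hlip.sum_abs_sub_comp_le hh hs (hx ▸ hs₀) hsy N)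

lemma exists_isOpen_dense_volume_lt_top :
    ∃ G : Set ℝ, IsOpen G ∧ Dense G ∧ volume G < ∞ := by
  obtain ⟨G, hQG, hG, hvol⟩ := Set.exists_isOpen_lt_of_lt (range ((↑) : ℚ → ℝ)) 1
    (by rw [(countable_range _).measure_zero volume]; exact one_pos)
  exact ⟨G, hG, Rat.denseRange_cast.mono hQG, hvol.trans ENNReal.one_lt_top⟩

lemma not_exists_lipschitzOnWith_sqMulSinInvSq_comp {h : ℝ → ℝ} (hh : Continuous h)
    (hpos : ∀ y, 0 ≤ h y) (hdense : Dense h.support) {x : ℝ} (hx : h x = 0) :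
    ¬ ∃ K : ℝ≥0, ∃ s ∈ 𝓝 x, LipschitzOnWith K (sqMulSinInvSq ∘ h) s := by
  rintro ⟨K, s, hs, hlip⟩
  obtain ⟨δ, hδ, hball⟩ := Metric.mem_nhds_iff.1 hs
  obtain ⟨y, hyx, hy⟩ := hdense.inter_open_nonempty _ isOpen_ball ⟨x, mem_ball_self hδ⟩
  have hxy : uIcc x y ⊆ s := by
    rw [← segment_eq_uIcc]
    exact ((convex_ball x δ).segment_subset (mem_ball_self hδ) hyx).trans hball
  exact not_lipschitzOnWith_sqMulSinInvSq_comp hh.continuousOn hx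
    ((hpos y).lt_of_ne' hy) K (hlip.mono hxy)

theorem stmt18 :
    ∃ (f : ℝ → ℝ) (F : Set ℝ),
      IsClosed F ∧ interior F = ∅ ∧ 0 < volume F ∧
      (∀ x : ℝ, DifferentiableAt ℝ f x) ∧
      (∀ x ∈ F, f x = 0) ∧
      -- `f` is locally Lipschitz at every point of the complement of `F` ...
      (∀ x ∉ F, ∃ K : NNReal, ∃ s ∈ 𝓝 x, LipschitzOnWith K f s) ∧
      -- ... and not Lipschitz at any point of `F`, so `ℝ \ F` is the largest open set
      -- on which `f` is locally Lipschitz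
      (∀ x ∈ F, ¬ ∃ K : NNReal, ∃ s ∈ 𝓝 x, LipschitzOnWith K f s) ∧
      ¬ SigmaPorous F := by
  obtain ⟨G, hGo, hGd, hGvol⟩ := exists_isOpen_dense_volume_lt_top
  obtain ⟨h, rfl, hh, hrange⟩ := hGo.exists_contDiff_support_eq (n := 1)
  have hF : volume h.supportᶜ = ∞ := by
    rw [measure_compl hGo.measurableSet hGvol.ne, Real.volume_univ, ENNReal.top_sub hGvol.ne]
  refine ⟨sqMulSinInvSq ∘ h, h.supportᶜ, hGo.isClosed_compl, ?_, hF ▸ ENNReal.zero_lt_top,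
    fun x => differentiable_sqMulSinInvSq.comp (hh.differentiable one_ne_zero) x, ?_, ?_, ?_,
    fun hσ => ENNReal.top_ne_zero (hF ▸ hσ.measure_eq_zero volume)⟩
  · rw [interior_compl, hGd.closure_eq, compl_univ]
  · intro x hx
    simp [Function.notMem_support.1 hx]
  · intro x hx
    exact ((contDiffAt_sqMulSinInvSq (not_not.1 hx)).comp x
      hh.contDiffAt).exists_lipschitzOnWith
  · intro x hx
    exact not_exists_lipschitzOnWith_sqMulSinInvSq_comp hh.continuous
      (fun y => (hrange ⟨y, rfl⟩).1) hGd (Function.notMem_support.1 hx)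
end
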